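/- arXiv:1401.7289 — 2 statements merged into one kernel-verified Lean document; each statement's English description precedes it below -/
import Mathlib

section
/- For every integer l ≥ 3 and every z ∈ (0,1), the potential function of the (l,3,3) MacKay–Neal code evaluated along the parametrized family of non-trivial fixed points at x1 = z^{l-1} satisfies U(z^{l-1}, x2(z^{l-1}); ε(z^{l-1})) = U(z), where U(z) := -3z^l/l + (1-z)(1-4z^{l-1}) + (1-z)^{1/3}(1-z^{l-1})^{-2/3} - 2(1-z)^{2/3}(1-z^{l-1})^{5/3}. -/
open Real

/-- Potential function of the `(l,3,3)` MacKay–Neal code on BEC(ε). -/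
noncomputable def potMN (l : ℕ) (x1 x2 ε : ℝ) : ℝ :=
  1 - ε * (1 - (1-x1)^3 * (1-x2)^2)^3
    - (3 / (l:ℝ)) * (1 - (1-x1)^2 * (1-x2)^3)^l
    - (1-x1)^3 * (1-x2)^3
    - 3 * x1 * (1-x1)^2 * (1-x2)^3
    - 3 * x2 * (1-x1)^3 * (1-x2)^2

/-- `x2(x1)` parametrizing the non-trivial fixed points. -/
noncomputable def x2c (l : ℕ) (x1 : ℝ) : ℝ :=
  1 - ((1 - x1 ^ ((1:ℝ)/((l:ℝ)-1))) / (1-x1)^2) ^ ((1:ℝ)/3)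

/-- `ε(x1)` parametrizing the non-trivial fixed points. -/
noncomputable def epsc (l : ℕ) (x1 : ℝ) : ℝ :=
  x2c l x1 / (1 - (1-x1)^3 * (1 - x2c l x1)^2)^2

/-- `U(z)` of the `(l,3,3)` MN codes. -/
noncomputable def Uz (l : ℕ) (z : ℝ) : ℝ :=
  -(3 * z^l / (l:ℝ)) + (1-z) * (1 - 4 * z^(l-1))
    + (1-z) ^ ((1:ℝ)/3) * (1 - z^(l-1)) ^ (-(2:ℝ)/3)
    - 2 * (1-z) ^ ((2:ℝ)/3) * (1 - z^(l-1)) ^ ((5:ℝ)/3)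

/-!
Write `x = z^(l-1)`. Since `x^(1/(l-1)) = z`, the fixed-point parametrization gives
`1 - x2 = t := ((1-z)/(1-x)^2)^(1/3)`, i.e. `(1-x)^2 t^3 = 1 - z`. With `ε = (1-t)/A^2`,
`A = 1 - (1-x)^3 t^2`, the term `ε A^3` equals `(1-t) A`
(also for `A = 0`, where `x / 0 = 0`), so the potential becomes a polynomial
in `x` and `t`; the fractional powers in `U(z)` are `t` and `(1-x)^3 t^2` in disguise.
-/

lemma pow_rpow_one_div_sub_one {z : ℝ} (hz : 0 ≤ z) {l : ℕ} (hl : 2 ≤ l) :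
    (z ^ (l - 1)) ^ ((1 : ℝ) / ((l : ℝ) - 1)) = z := by
  rw [← Nat.cast_pred (by omega), one_div, Real.pow_rpow_inv_natCast hz (by omega)]

section CubeRoot

variable {s w : ℝ}

lemma sq_mul_rpow_one_third_div_sq_pow_three (hs : 0 ≤ s) (hw : 0 < w) :
    w ^ 2 * ((s / w ^ 2) ^ ((1 : ℝ) / 3)) ^ 3 = s := by
  rw [← Real.rpow_mul_natCast (by positivity)]
  norm_num
  field_simp

lemma rpow_one_third_mul_rpow_neg_two_thirds (hs : 0 ≤ s) (hw : 0 < w) :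
    s ^ ((1 : ℝ) / 3) * w ^ (-(2 : ℝ) / 3) = (s / w ^ 2) ^ ((1 : ℝ) / 3) := by
  rw [Real.div_rpow hs (by positivity), ← Real.rpow_natCast_mul hw.le,
    show -(2 : ℝ) / 3 = -((2 : ℕ) * (1 / 3)) by norm_num, Real.rpow_neg hw.le, ← div_eq_mul_inv]

lemma rpow_two_thirds_mul_rpow_five_thirds (hs : 0 ≤ s) (hw : 0 < w) :
    s ^ ((2 : ℝ) / 3) * w ^ ((5 : ℝ) / 3) = w ^ 3 * ((s / w ^ 2) ^ ((1 : ℝ) / 3)) ^ 2 := by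
  have h5 : w ^ ((5 : ℝ) / 3) = w ^ 3 / w ^ ((4 : ℝ) / 3) := by
    rw [← Real.rpow_natCast, ← Real.rpow_sub hw]
    norm_num
  rw [← Real.rpow_mul_natCast (by positivity), Real.div_rpow hs (by positivity),
    ← Real.rpow_natCast_mul hw.le, h5]
  norm_num
  ring

end CubeRoot

lemma potMN_one_sub_div_sq (l : ℕ) (x t : ℝ) :
    potMN l x (1 - t) ((1 - t) / (1 - (1 - x) ^ 3 * t ^ 2) ^ 2) =
      t - 2 * (1 - x) ^ 3 * t ^ 2 + (1 - 4 * x) * (1 - x) ^ 2 * t ^ 3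
        - 3 / l * (1 - (1 - x) ^ 2 * t ^ 3) ^ l := by
  unfold potMN
  simp only [sub_sub_cancel]
  field_simp
  ring

/-- The potential function evaluated along the non-trivial fixed points at
`x1 = z^(l-1)` equals `U(z)`. -/
theorem stmt2 (l : ℕ) (hl : 3 ≤ l) (z : ℝ) (hz : z ∈ Set.Ioo (0:ℝ) 1) :
    potMN l (z^(l-1)) (x2c l (z^(l-1))) (epsc l (z^(l-1))) = Uz l z := by
  obtain ⟨hz0, hz1⟩ := hz
  have hw : 0 < 1 - z ^ (l - 1) := sub_pos.mpr (pow_lt_one₀ hz0.le hz1 (by omega))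
  have hs : 0 ≤ 1 - z := by linarith
  set t := ((1 - z) / (1 - z ^ (l - 1)) ^ 2) ^ ((1 : ℝ) / 3)
  have hx2 : x2c l (z ^ (l - 1)) = 1 - t := by
    rw [x2c, pow_rpow_one_div_sub_one hz0.le (by omega)]
  have hcube : (1 - z ^ (l - 1)) ^ 2 * t ^ 3 = 1 - z :=
    sq_mul_rpow_one_third_div_sq_pow_three hs hw
  rw [epsc, hx2, sub_sub_cancel, potMN_one_sub_div_sq, Uz, hcube, sub_sub_cancel]
  linear_combination (1 - 4 * z ^ (l - 1)) * hcube - rpow_one_third_mul_rpow_neg_two_thirds hs hw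
    + 2 * rpow_two_thirds_mul_rpow_five_thirds hs hw
end

section
/- For all integers n ≥ 1 and l ≥ 2 and every z ∈ (0,1), z^n(1-z^{l-1})² ≤ (n/(n+2l-2))^{n/(l-1)} · ((2l-2)/(n+2l-2))² < ((2l-2)/(n+2l-2))². -/
open Real

/-- Weighted AM-GM with weights `w₁ = a/(a+b)`, `w₂ = b/(a+b)` at the points `x/w₁`, `(1-x)/w₂`
gives `(x/w₁)^w₁ ((1-x)/w₂)^w₂ ≤ 1`; then raise to the power `a+b`. -/
theorem rpow_mul_one_sub_rpow_le {a b x : ℝ} (ha : 0 < a) (hb : 0 < b) (hx₀ : 0 ≤ x)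
    (hx₁ : x ≤ 1) :
    x ^ a * (1 - x) ^ b ≤ (a / (a + b)) ^ a * (b / (a + b)) ^ b := by
  have hs : 0 < a + b := add_pos ha hb
  set w₁ := a / (a + b)
  set w₂ := b / (a + b)
  have hw₁ : 0 < w₁ := div_pos ha hs
  have hw₂ : 0 < w₂ := div_pos hb hs
  have hy : 0 ≤ 1 - x := sub_nonneg.mpr hx₁
  have hamgm := geom_mean_le_arith_mean2_weighted hw₁.le hw₂.le (div_nonneg hx₀ hw₁.le)
    (div_nonneg hy hw₂.le) ((add_div a b (a + b)).symm.trans (div_self hs.ne'))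
  have hmean : w₁ * (x / w₁) + w₂ * ((1 - x) / w₂) = 1 := by field_simp; ring
  rw [hmean] at hamgm
  have hpow := rpow_le_rpow (by positivity) hamgm hs.le
  rw [one_rpow, mul_rpow (by positivity) (by positivity), ← rpow_mul (by positivity),
    ← rpow_mul (by positivity), div_mul_cancel₀ a hs.ne', div_mul_cancel₀ b hs.ne',
    div_rpow hx₀ hw₁.le, div_rpow hy hw₂.le, div_mul_div_comm, div_le_one (by positivity)] at hpow
  exact hpow

theorem pow_mul_one_sub_pow_sq_le {n m : ℕ} (hn : 0 < n) (hm : 0 < m) {z : ℝ} (hz₀ : 0 ≤ z)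
    (hz₁ : z ≤ 1) :
    z ^ n * (1 - z ^ m) ^ 2
      ≤ ((n : ℝ) / (n + 2 * m)) ^ ((n : ℝ) / m) * (2 * m / (n + 2 * m)) ^ 2 := by
  have hm' : (0 : ℝ) < m := Nat.cast_pos.mpr hm
  have ha : (0 : ℝ) < n / m := div_pos (Nat.cast_pos.mpr hn) hm'
  have hbound := rpow_mul_one_sub_rpow_le ha two_pos (pow_nonneg hz₀ m) (pow_le_one₀ hz₀ hz₁)
  have hz : (z ^ m) ^ ((n : ℝ) / m) = z ^ n := by
    rw [← rpow_natCast z m, ← rpow_mul hz₀, mul_div_cancel₀ _ hm'.ne', rpow_natCast]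
  have hsum : (n : ℝ) / m + 2 = (n + 2 * m) / m := by field_simp
  rw [hz, hsum, div_div_div_cancel_right₀ hm'.ne', div_div_eq_mul_div, rpow_two,
    rpow_two] at hbound
  exact hbound

/-- For integers `n ≥ 1`, `l ≥ 2` and `z ∈ (0,1)`,
`z^n (1-z^{l-1})² ≤ (n/(n+2l-2))^{n/(l-1)} ((2l-2)/(n+2l-2))² < ((2l-2)/(n+2l-2))²`. -/
theorem stmt11 (n l : ℕ) (hn : 1 ≤ n) (hl : 2 ≤ l) (z : ℝ)
    (hz : z ∈ Set.Ioo (0:ℝ) 1) :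
    z^n * (1 - z^(l-1))^2
        ≤ ((n:ℝ)/((n:ℝ)+2*(l:ℝ)-2)) ^ ((n:ℝ)/((l:ℝ)-1))
            * ((2*(l:ℝ)-2)/((n:ℝ)+2*(l:ℝ)-2))^2 ∧
    ((n:ℝ)/((n:ℝ)+2*(l:ℝ)-2)) ^ ((n:ℝ)/((l:ℝ)-1))
        * ((2*(l:ℝ)-2)/((n:ℝ)+2*(l:ℝ)-2))^2
      < ((2*(l:ℝ)-2)/((n:ℝ)+2*(l:ℝ)-2))^2 := by
  obtain ⟨m, rfl⟩ : ∃ m, l = m + 1 := ⟨l - 1, by omega⟩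
  have hm : 0 < m := by omega
  have hm' : (0 : ℝ) < m := by exact_mod_cast hm
  rw [Nat.add_sub_cancel]
  push_cast
  rw [show (n : ℝ) + 2 * (m + 1) - 2 = n + 2 * m by ring,
    show (2 : ℝ) * (m + 1) - 2 = 2 * m by ring, add_sub_cancel_right]
  refine ⟨pow_mul_one_sub_pow_sq_le hn hm hz.1.le hz.2.le, mul_lt_of_lt_one_left (by positivity) ?_⟩
  exact rpow_lt_one (by positivity) ((div_lt_one (by positivity)).mpr (by linarith))
    (by positivity)
end
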